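/- Let $n$ be even and let $\mu$ be a probability distribution on $\{0,1\}^n$ that is invariant under all permutations of the coordinates and invariant under the global flip $x \mapsto \mathbf{1} - x$. Let $A = \{x : \sum_i x_i \le n/2\}$ and let $A_{n/2} = \{x : \sum_i x_i = n/2\}$. Then for every monotone set $B \subseteq \{0,1\}^n$, $\mu(A \oplus B) \ge \frac{1}{6} - \mu(A_{n/2})$. In particular, when $\mu(A_{n/2})$ is negligible, every monotone set is at $\mu$-distance at least essentially $1/6$ from $A$. -/

import Mathlib

/-- A set `B ⊆ {0,1}^n` is monotone if `x ∈ B` and `x ≤ y` (coordinatewise)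
imply `y ∈ B`. -/
def IsMonotoneSet {n : ℕ} (B : Finset (Fin n → Bool)) : Prop :=
  ∀ x ∈ B, ∀ y : Fin n → Bool, (∀ i, x i ≤ y i) → y ∈ B

/-- Number of coordinates equal to `1`. -/
def countOnes {n : ℕ} (x : Fin n → Bool) : ℕ :=
  (Finset.univ.filter fun i => x i = true).card

/-!
Exchangeability makes `μ` constant on each layer `{x | countOnes x = k}`, and the flip makes the
constants of the layers `k` and `n - k` agree. For a monotone `B`, the upward local LYM inequality
says that the density of `B` in layer `k` is nondecreasing in `k`, so for `2k ≤ n` the set `B`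
has at least as many points in layer `n - k` as in layer `k`. Hence `μ(B ∩ L) ≤ μ(B ∩ H)` for
the strict lower and upper halves `L` and `H` of the cube. As `L ⊆ A` and `H` is disjoint
from `A`, this gives `μ(A ⊕ B) ≥ μ(L \ B) + μ(B ∩ H) ≥ μ(L) = (1 - μ(A_{n/2})) / 2`.
-/

open Finset
open scoped FinsetFamily

namespace Finset

variable {ι M : Type*} [AddCommMonoid M]

theorem sum_compls {α : Type*} [BooleanAlgebra α] (s : Finset α) (f : α → M) :
    ∑ a ∈ sᶜˢ, f a = ∑ a ∈ s, f aᶜ :=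
  sum_map _ _ _

variable [PartialOrder M] [IsOrderedAddMonoid M]

theorem sum_le_sum_of_card_le_of_forall_eq {s t : Finset ι} {f : ι → M}
    (hf : ∀ x ∈ s, ∀ y ∈ t, f x = f y) (ht : ∀ y ∈ t, 0 ≤ f y) (hst : #s ≤ #t) :
    ∑ x ∈ s, f x ≤ ∑ y ∈ t, f y := by
  rcases s.eq_empty_or_nonempty with rfl | ⟨x₀, hx₀⟩
  · simpa using sum_nonneg ht
  obtain ⟨y₀, hy₀⟩ := card_pos.1 ((card_pos.2 ⟨x₀, hx₀⟩).trans_le hst)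
  rw [sum_congr rfl fun x hx => hf x hx y₀ hy₀, sum_congr rfl fun y hy => (hf x₀ hx₀ y hy).symm,
    sum_const, sum_const, hf x₀ hx₀ y₀ hy₀]
  exact nsmul_le_nsmul_left (ht y₀ hy₀) hst

theorem sum_le_sum_symmDiff_of_subset_of_disjoint [DecidableEq ι] {f : ι → M} (hf : ∀ i, 0 ≤ f i)
    {A B L H : Finset ι} (hL : L ⊆ A) (hH : Disjoint H A)
    (hLH : ∑ i ∈ B ∩ L, f i ≤ ∑ i ∈ B ∩ H, f i) : ∑ i ∈ L, f i ≤ ∑ i ∈ symmDiff A B, f i := by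
  have hBH : B ∩ H ⊆ B \ A := fun i hi =>
    mem_sdiff.2 ⟨(mem_inter.1 hi).1, disjoint_left.1 hH (mem_inter.1 hi).2⟩
  calc ∑ i ∈ L, f i = ∑ i ∈ B ∩ L, f i + ∑ i ∈ L \ B, f i := by
        rw [inter_comm, sum_inter_add_sum_sdiff]
    _ ≤ ∑ i ∈ B \ A, f i + ∑ i ∈ A \ B, f i :=
        add_le_add (hLH.trans (sum_le_sum_of_subset_of_nonneg hBH fun i _ _ => hf i))
          (sum_le_sum_of_subset_of_nonneg (sdiff_subset_sdiff hL le_rfl) fun i _ _ => hf i)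
    _ = ∑ i ∈ symmDiff A B, f i := by
        rw [symmDiff_def, sup_eq_union, sum_union disjoint_sdiff_sdiff, add_comm]

end Finset

section UpperSet

variable {α : Type*} [Fintype α] [DecidableEq α] {𝒜 : Finset (Finset α)}

theorem Finset.card_mul_le_card_upShadow_mul {r : ℕ} (h𝒜 : (𝒜 : Set (Finset α)).Sized r) :
    #𝒜 * (Fintype.card α - r) ≤ #(∂⁺ 𝒜) * (r + 1) := by
  rcases 𝒜.eq_empty_or_nonempty with rfl | ⟨s, hs⟩
  · simp
  have hr : r ≤ Fintype.card α := h𝒜 hs ▸ s.card_le_univ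
  have h𝒜c : (𝒜ᶜˢ : Set (Finset α)).Sized (Fintype.card α - r) := by
    intro t ht
    rw [mem_coe, mem_compls] at ht
    rw [← h𝒜 ht, card_compl, Nat.sub_sub_self (card_le_univ t)]
  have := local_lubell_yamamoto_meshalkin_inequality_mul h𝒜c
  rwa [shadow_compls, card_compls, card_compls, Nat.sub_sub_self hr] at this

theorem IsUpperSet.upShadow_slice_subset (h𝒜 : IsUpperSet (𝒜 : Set (Finset α))) (r : ℕ) :
    ∂⁺ (𝒜 # r) ⊆ 𝒜 # (r + 1) := by
  intro t ht
  obtain ⟨s, hs, hst, hcard⟩ := mem_upShadow_iff_exists_mem_card_add_one.1 ht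
  rw [mem_slice] at hs ⊢
  exact ⟨h𝒜 hst hs.1, by rw [hcard, hs.2]⟩

theorem IsUpperSet.card_slice_mul_le (h𝒜 : IsUpperSet (𝒜 : Set (Finset α))) (r : ℕ) :
    #(𝒜 # r) * (Fintype.card α - r) ≤ #(𝒜 # (r + 1)) * (r + 1) :=
  (card_mul_le_card_upShadow_mul sized_slice).trans <|
    Nat.mul_le_mul_right _ (card_le_card (h𝒜.upShadow_slice_subset r))

theorem IsUpperSet.card_slice_mul_choose_le (h𝒜 : IsUpperSet (𝒜 : Set (Finset α))) {k l : ℕ}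
    (hkl : k ≤ l) :
    #(𝒜 # k) * (Fintype.card α).choose l ≤ #(𝒜 # l) * (Fintype.card α).choose k := by
  induction l, hkl using Nat.le_induction with
  | base => rfl
  | succ l _ ih =>
    set N := Fintype.card α
    refine Nat.le_of_mul_le_mul_right ?_ l.succ_pos
    calc #(𝒜 # k) * N.choose (l + 1) * (l + 1)
        = #(𝒜 # k) * N.choose l * (N - l) := by rw [mul_assoc, Nat.choose_succ_right_eq]; ring
      _ ≤ #(𝒜 # l) * N.choose k * (N - l) := Nat.mul_le_mul_right _ ih
      _ = #(𝒜 # l) * (N - l) * N.choose k := by ring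
      _ ≤ #(𝒜 # (l + 1)) * (l + 1) * N.choose k :=
          Nat.mul_le_mul_right _ (h𝒜.card_slice_mul_le l)
      _ = #(𝒜 # (l + 1)) * N.choose k * (l + 1) := by ring

theorem IsUpperSet.card_slice_le_card_slice_sub (h𝒜 : IsUpperSet (𝒜 : Set (Finset α))) {k : ℕ}
    (hk : 2 * k ≤ Fintype.card α) : #(𝒜 # k) ≤ #(𝒜 # (Fintype.card α - k)) := by
  have h := h𝒜.card_slice_mul_choose_le (k := k) (l := Fintype.card α - k) (by omega)
  rw [Nat.choose_symm (by omega)] at h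
  exact Nat.le_of_mul_le_mul_right h (Nat.choose_pos (by omega))

end UpperSet

section Cube

variable {n : ℕ}

def onesFinset (x : Fin n → Bool) : Finset (Fin n) := univ.filter fun i => x i = true

theorem onesFinset_injective : Function.Injective (onesFinset (n := n)) := by
  intro x y h
  funext i
  simpa [onesFinset] using congrArg (i ∈ ·) h

theorem countOnes_le (x : Fin n → Bool) : countOnes x ≤ n :=
  (card_le_univ _).trans_eq (Fintype.card_fin n)

theorem countOnes_compl (x : Fin n → Bool) : countOnes xᶜ = n - countOnes x := by
  have := card_filter_add_card_filter_not (s := univ) (fun i => x i = true)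
  rw [card_univ, Fintype.card_fin] at this
  unfold countOnes
  simp only [Pi.compl_apply, Bool.compl_eq_bnot, Bool.not_eq_true', Bool.not_eq_true] at *
  omega

theorem exists_perm_comp_eq_of_countOnes_eq {x y : Fin n → Bool} (h : countOnes x = countOnes y) :
    ∃ σ : Equiv.Perm (Fin n), x ∘ σ = y := by
  have := Set.powersetCard.isPretransitive (α := Fin n) (n := countOnes y)
  obtain ⟨σ, hσ⟩ := MulAction.exists_smul_eq (Equiv.Perm (Fin n))
    (⟨onesFinset x, h⟩ : Set.powersetCard (Fin n) (countOnes y)) ⟨onesFinset y, rfl⟩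
  refine ⟨σ⁻¹, funext fun i => Bool.eq_iff_iff.2 ?_⟩
  have := congrArg (fun s : Set.powersetCard (Fin n) (countOnes y) => i ∈ (s : Finset (Fin n))) hσ
  simpa [Set.powersetCard.coe_smul, onesFinset, ← inv_smul_mem_iff] using this

theorem apply_eq_of_countOnes_eq {β : Type*} {μ : (Fin n → Bool) → β}
    (hperm : ∀ σ : Equiv.Perm (Fin n), ∀ x : Fin n → Bool, μ (x ∘ σ) = μ x)
    {x y : Fin n → Bool} (h : countOnes x = countOnes y) : μ x = μ y := by
  obtain ⟨σ, rfl⟩ := exists_perm_comp_eq_of_countOnes_eq h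
  exact (hperm σ x).symm

theorem sum_le_sum_of_card_layer_le {M : Type*} [AddCommMonoid M] [PartialOrder M]
    [IsOrderedAddMonoid M] {μ : (Fin n → Bool) → M} (hnn : ∀ x, 0 ≤ μ x)
    (hperm : ∀ σ : Equiv.Perm (Fin n), ∀ x : Fin n → Bool, μ (x ∘ σ) = μ x)
    {S T : Finset (Fin n → Bool)}
    (hST : ∀ k, #(S.filter (countOnes · = k)) ≤ #(T.filter (countOnes · = k))) :
    ∑ x ∈ S, μ x ≤ ∑ x ∈ T, μ x := by
  have hmaps (U : Finset (Fin n → Bool)) : ∀ x ∈ U, countOnes x ∈ range (n + 1) :=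
    fun x _ => mem_range.2 (Nat.lt_succ_of_le (countOnes_le x))
  rw [← sum_fiberwise_of_maps_to (hmaps S), ← sum_fiberwise_of_maps_to (hmaps T)]
  refine sum_le_sum fun k _ => sum_le_sum_of_card_le_of_forall_eq (fun x hx y hy => ?_)
    (fun y _ => hnn y) (hST k)
  exact apply_eq_of_countOnes_eq hperm ((mem_filter.1 hx).2.trans (mem_filter.1 hy).2.symm)

theorem IsMonotoneSet.isUpperSet_image_onesFinset {B : Finset (Fin n → Bool)}
    (hB : IsMonotoneSet B) :
    IsUpperSet ((B.image onesFinset : Finset (Finset (Fin n))) : Set (Finset (Fin n))) := by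
  rintro s t hst hs
  obtain ⟨x, hx, rfl⟩ := mem_image.1 hs
  refine mem_image.2 ⟨fun i => decide (i ∈ t), hB x hx _ fun i => ?_, by ext i; simp [onesFinset]⟩
  exact Bool.le_iff_imp.2 fun hxi => decide_eq_true (hst (by simpa [onesFinset] using hxi))

theorem slice_image_onesFinset (B : Finset (Fin n → Bool)) (k : ℕ) :
    (B.image onesFinset) # k = (B.filter (countOnes · = k)).image onesFinset := by
  rw [slice, filter_image]
  rfl

theorem IsMonotoneSet.card_layer_le {B : Finset (Fin n → Bool)} (hB : IsMonotoneSet B) {k : ℕ}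
    (hk : 2 * k ≤ n) : #(B.filter (countOnes · = k)) ≤ #(B.filter (countOnes · = n - k)) := by
  have := hB.isUpperSet_image_onesFinset.card_slice_le_card_slice_sub (k := k) (by simpa using hk)
  simpa only [Fintype.card_fin, slice_image_onesFinset,
    card_image_of_injective _ onesFinset_injective] using this

def belowMiddle (n : ℕ) : Finset (Fin n → Bool) := univ.filter fun x => 2 * countOnes x < n

def aboveMiddle (n : ℕ) : Finset (Fin n → Bool) := univ.filter fun x => n < 2 * countOnes x

theorem compls_belowMiddle : (belowMiddle n)ᶜˢ = aboveMiddle n := by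
  ext x
  simp only [belowMiddle, aboveMiddle, mem_compls, mem_filter, mem_univ, true_and,
    countOnes_compl]
  have := countOnes_le x
  omega

theorem sum_univ_eq_belowMiddle_add_middle_add_aboveMiddle {M : Type*} [AddCommMonoid M]
    (f : (Fin n → Bool) → M) :
    ∑ x, f x = ∑ x ∈ belowMiddle n, f x + ∑ x ∈ univ.filter (fun x => 2 * countOnes x = n), f x
      + ∑ x ∈ aboveMiddle n, f x := by
  rw [← sum_union, ← sum_union]
  · congr 1
    ext x
    simp only [belowMiddle, aboveMiddle, mem_union, mem_filter, mem_univ, true_and, true_iff]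
    omega
  all_goals
    simp only [belowMiddle, aboveMiddle, disjoint_left, mem_union, mem_filter, mem_univ, true_and]
    intro x
    omega

theorem IsMonotoneSet.card_layer_inter_belowMiddle_le {B : Finset (Fin n → Bool)}
    (hB : IsMonotoneSet B) (k : ℕ) :
    #((B ∩ belowMiddle n).filter (countOnes · = k))
      ≤ #((B ∩ aboveMiddle n)ᶜˢ.filter (countOnes · = k)) := by
  by_cases hk : 2 * k < n
  · calc #((B ∩ belowMiddle n).filter (countOnes · = k))
        ≤ #(B.filter (countOnes · = k)) := card_le_card (filter_subset_filter _ inter_subset_left)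
      _ ≤ #(B.filter (countOnes · = n - k)) := hB.card_layer_le hk.le
      _ ≤ #((B ∩ aboveMiddle n)ᶜˢ.filter (countOnes · = k)) := by
        rw [← card_compls ((B ∩ aboveMiddle n)ᶜˢ.filter _)]
        refine card_le_card fun x hx => ?_
        simp only [mem_filter, mem_compls, compl_compl, mem_inter, aboveMiddle, mem_univ,
          true_and, countOnes_compl] at hx ⊢
        have := countOnes_le x
        exact ⟨⟨hx.1, by omega⟩, by omega⟩
  · rw [filter_eq_empty_iff.2 fun x hx hxk => ?_, card_empty]
    · exact Nat.zero_le _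
    · simp only [belowMiddle, mem_inter, mem_filter, mem_univ, true_and] at hx
      omega

theorem IsMonotoneSet.sum_inter_belowMiddle_le {M : Type*} [AddCommMonoid M] [PartialOrder M]
    [IsOrderedAddMonoid M] {μ : (Fin n → Bool) → M} (hnn : ∀ x, 0 ≤ μ x)
    (hperm : ∀ σ : Equiv.Perm (Fin n), ∀ x : Fin n → Bool, μ (x ∘ σ) = μ x)
    (hcompl : ∀ x, μ xᶜ = μ x) {B : Finset (Fin n → Bool)} (hB : IsMonotoneSet B) :
    ∑ x ∈ B ∩ belowMiddle n, μ x ≤ ∑ x ∈ B ∩ aboveMiddle n, μ x :=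
  calc ∑ x ∈ B ∩ belowMiddle n, μ x
      ≤ ∑ x ∈ (B ∩ aboveMiddle n)ᶜˢ, μ x :=
        sum_le_sum_of_card_layer_le hnn hperm hB.card_layer_inter_belowMiddle_le
    _ = ∑ x ∈ B ∩ aboveMiddle n, μ x := by
        rw [sum_compls]
        exact sum_congr rfl fun x _ => hcompl x

end Cube

theorem far_from_majority_general {n : ℕ} (μ : (Fin n → Bool) → ℝ)
    (hnn : ∀ x, 0 ≤ μ x) (hsum : ∑ x : Fin n → Bool, μ x = 1)
    (hperm : ∀ σ : Equiv.Perm (Fin n), ∀ x : Fin n → Bool, μ (x ∘ σ) = μ x)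
    (hflip : ∀ x : Fin n → Bool, μ (fun i => !x i) = μ x)
    (B : Finset (Fin n → Bool)) (hB : IsMonotoneSet B) :
    ∑ x ∈ symmDiff (Finset.univ.filter fun x : Fin n → Bool => 2 * countOnes x ≤ n) B, μ x
      ≥ 1 / 6 - ∑ x ∈ Finset.univ.filter (fun x : Fin n → Bool => 2 * countOnes x = n), μ x := by
  -- `hflip` serves as `∀ x, μ xᶜ = μ x`: in `Fin n → Bool`, `xᶜ` unfolds to `fun i => !x i`.
  have hhalves : ∑ x ∈ aboveMiddle n, μ x = ∑ x ∈ belowMiddle n, μ x := by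
    rw [← compls_belowMiddle, sum_compls]
    exact sum_congr rfl fun x _ => hflip x
  have hmass := sum_univ_eq_belowMiddle_add_middle_add_aboveMiddle μ
  have hfar := sum_le_sum_symmDiff_of_subset_of_disjoint hnn
    (A := univ.filter fun x : Fin n → Bool => 2 * countOnes x ≤ n)
    (fun x hx => by simp only [belowMiddle, mem_filter, mem_univ, true_and] at hx ⊢; omega)
    (disjoint_filter.2 fun x _ hx hx' => by omega)
    (hB.sum_inter_belowMiddle_le hnn hperm hflip)
  have hmiddle := sum_nonneg fun x (_ : x ∈ univ.filter fun x => 2 * countOnes x = n) => hnn x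
  linarith

/-- For even `n`, an exchangeable and flip-invariant probability distribution
`μ` on `{0,1}^n`, `A = {∑ x_i ≤ n/2}` and `A_{n/2} = {∑ x_i = n/2}`:
every monotone `B` satisfies `μ(A ⊕ B) ≥ 1/6 - μ(A_{n/2})`. -/
theorem far_from_majority {n : ℕ} (hn : Even n) (μ : (Fin n → Bool) → ℝ)
    (hnn : ∀ x, 0 ≤ μ x) (hsum : ∑ x : Fin n → Bool, μ x = 1)
    (hperm : ∀ σ : Equiv.Perm (Fin n), ∀ x : Fin n → Bool, μ (x ∘ σ) = μ x)
    (hflip : ∀ x : Fin n → Bool, μ (fun i => !x i) = μ x)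
    (B : Finset (Fin n → Bool)) (hB : IsMonotoneSet B) :
    ∑ x ∈ symmDiff (Finset.univ.filter fun x : Fin n → Bool => 2 * countOnes x ≤ n) B, μ x
      ≥ 1 / 6 - ∑ x ∈ Finset.univ.filter (fun x : Fin n → Bool => 2 * countOnes x = n), μ x :=
  far_from_majority_general μ hnn hsum hperm hflip B hB
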